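/- Every pointwise stable model of a completable set of sentences is a supported model. -/

import Mathlib

/-! Framework: first-order formulas over a signature with predicate symbols `P`
(partitioned into intensional and extensional ones by `ints : P → Bool`) and a
fixed domain `D`.  Sentences over the extended signature σ^I are represented with
quantifiers as functions on the domain (names of domain elements are the elements
themselves), so ground atoms are pairs `(p, ds)`. -/

inductive Fml (P D : Type) : Type where
  | atom : P → List D → Fml P D
  | eq : D → D → Fml P D
  | bot : Fml P D
  | and : Fml P D → Fml P D → Fml P D
  | or : Fml P D → Fml P D → Fml P D
  | imp : Fml P D → Fml P D → Fml P D
  | all : (D → Fml P D) → Fml P D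
  | ex : (D → Fml P D) → Fml P D

abbrev GrAtom (P D : Type) := P × List D
abbrev Interp (P D : Type) := P → List D → Prop

namespace Fml
variable {P D : Type}

/-- Classical satisfaction. -/
def sat (I : Interp P D) : Fml P D → Prop
  | atom p ds => I p ds
  | eq a b => a = b
  | bot => False
  | and F G => F.sat I ∧ G.sat I
  | or F G => F.sat I ∨ G.sat I
  | imp F G => F.sat I → G.sat I
  | all f => ∀ d, (f d).sat I
  | ex f => ∃ d, (f d).sat I

/-- `I↓`: the intensional ground atoms satisfied by `I`. -/
def idown (ints : P → Bool) (I : Interp P D) : Set (GrAtom P D) :=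
  {a | ints a.1 = true ∧ I a.1 a.2}

/-- Here-and-there satisfaction for an HT-interpretation `⟨H, I⟩`. -/
def htSat (ints : P → Bool) (H : Set (GrAtom P D)) (I : Interp P D) : Fml P D → Prop
  | atom p ds => if ints p then (p, ds) ∈ H else I p ds
  | eq a b => a = b
  | bot => False
  | and F G => F.htSat ints H I ∧ G.htSat ints H I
  | or F G => F.htSat ints H I ∨ G.htSat ints H I
  | imp F G => (F.htSat ints H I → G.htSat ints H I) ∧ (F.sat I → G.sat I)
  | all f => ∀ d, (f d).htSat ints H I
  | ex f => ∃ d, (f d).htSat ints H I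

/-- `F` contains an intensional predicate symbol. -/
def hasIntens (ints : P → Bool) : Fml P D → Prop
  | atom p _ => ints p = true
  | eq _ _ => False
  | bot => False
  | and F G => F.hasIntens ints ∨ G.hasIntens ints
  | or F G => F.hasIntens ints ∨ G.hasIntens ints
  | imp F G => F.hasIntens ints ∨ G.hasIntens ints
  | all f => ∃ d, (f d).hasIntens ints
  | ex f => ∃ d, (f d).hasIntens ints

/-- The predicate symbol `q` occurs in `F`. -/
def hasPred (q : P) : Fml P D → Prop
  | atom p _ => p = q
  | eq _ _ => False
  | bot => False
  | and F G => F.hasPred q ∨ G.hasPred q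
  | or F G => F.hasPred q ∨ G.hasPred q
  | imp F G => F.hasPred q ∨ G.hasPred q
  | all f => ∃ d, (f d).hasPred q
  | ex f => ∃ d, (f d).hasPred q

open scoped Classical in
/-- The set `Pos_I(F)` of strictly positive atoms of `F` with respect to `I`. -/
noncomputable def pos (ints : P → Bool) (I : Interp P D) : Fml P D → Set (GrAtom P D)
  | atom p ds => if ints p = true ∧ I p ds then {(p, ds)} else ∅
  | eq _ _ => ∅
  | bot => ∅
  | and F G =>
      if (Fml.and F G).hasIntens ints ∧ (Fml.and F G).sat I then
        F.pos ints I ∪ G.pos ints I else ∅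
  | or F G =>
      if (Fml.or F G).hasIntens ints ∧ (Fml.or F G).sat I then
        F.pos ints I ∪ G.pos ints I else ∅
  | imp F G =>
      if (Fml.imp F G).hasIntens ints ∧ (Fml.imp F G).sat I then G.pos ints I else ∅
  | all f =>
      if (Fml.all f).hasIntens ints ∧ (Fml.all f).sat I then ⋃ d, (f d).pos ints I else ∅
  | ex f =>
      if (Fml.ex f).hasIntens ints ∧ (Fml.ex f).sat I then ⋃ d, (f d).pos ints I else ∅

/-- `ruleSub S R`: `R` is obtained from a rule subformula of `S` (an occurrence of an
implication not in the antecedent of any implication) by substituting domain elements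
for the free variables. -/
inductive ruleSub : Fml P D → Fml P D → Prop
  | self (F G : Fml P D) : ruleSub (Fml.imp F G) (Fml.imp F G)
  | andL {F G R : Fml P D} : ruleSub F R → ruleSub (Fml.and F G) R
  | andR {F G R : Fml P D} : ruleSub G R → ruleSub (Fml.and F G) R
  | orL {F G R : Fml P D} : ruleSub F R → ruleSub (Fml.or F G) R
  | orR {F G R : Fml P D} : ruleSub G R → ruleSub (Fml.or F G) R
  | impR {F G R : Fml P D} : ruleSub G R → ruleSub (Fml.imp F G) R
  | all {f : D → Fml P D} {R : Fml P D} (d : D) : ruleSub (f d) R → ruleSub (Fml.all f) R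
  | ex {f : D → Fml P D} {R : Fml P D} (d : D) : ruleSub (f d) R → ruleSub (Fml.ex f) R

end Fml

variable {P D : Type}

/-- Edge relation of the positive dependency graph `G^sp_I(Γ)`. -/
def depEdge (ints : P → Bool) (I : Interp P D) (Γ : Set (Fml P D))
    (A B : GrAtom P D) : Prop :=
  ∃ S ∈ Γ, ∃ F G : Fml P D, S.ruleSub (Fml.imp F G) ∧
    A ∈ G.pos ints I ∧ B ∈ F.pos ints I

/-- A graph (given by its edge relation) has no infinite walks. -/
def NoInfWalks {V : Type} (E : V → V → Prop) : Prop :=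
  ¬ ∃ w : ℕ → V, ∀ n, E (w n) (w (n + 1))

def SatSet (I : Interp P D) (Γ : Set (Fml P D)) : Prop := ∀ F ∈ Γ, F.sat I

def HtSatSet (ints : P → Bool) (H : Set (GrAtom P D)) (I : Interp P D)
    (Γ : Set (Fml P D)) : Prop := ∀ F ∈ Γ, F.htSat ints H I

/-- `I` is a stable model of `Γ`. -/
def StableModel (ints : P → Bool) (I : Interp P D) (Γ : Set (Fml P D)) : Prop :=
  SatSet I Γ ∧ ∀ H : Set (GrAtom P D), H ⊂ Fml.idown ints I → ¬ HtSatSet ints H I Γ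

/-- `I` is a pointwise stable model of `Γ`. -/
def PointwiseStable (ints : P → Bool) (I : Interp P D) (Γ : Set (Fml P D)) : Prop :=
  SatSet I Γ ∧ ∀ M ∈ Fml.idown ints I,
    ¬ HtSatSet ints (Fml.idown ints I \ {M}) I Γ

/-! ### Completable sets -/

/-- A member of the definition of the intensional symbol `p`: the completable
sentence `∀̃ (F(U, V) → p(V))` with `m` extra variables `U` and `k` head variables `V`. -/
structure CRule (P D : Type) where
  p : P
  k : ℕ
  m : ℕ
  F : (Fin m → D) → (Fin k → D) → Fml P D

/-- A first-order constraint `∀̃ (F → G)` (with `G` containing no intensional symbols). -/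
structure CConstr (P D : Type) where
  n : ℕ
  F : (Fin n → D) → Fml P D
  G : (Fin n → D) → Fml P D

/-- A completable set of sentences: definitions plus constraints. -/
structure CSet (P D : Type) where
  rules : List (CRule P D)
  constrs : List (CConstr P D)

/-- The conditions making a `CSet` a completable set: head symbols are intensional,
consequents of definitions of the same symbol are identical, and consequents of
constraints contain no intensional symbols. -/
def CSet.Completable (ints : P → Bool) (Γ : CSet P D) : Prop :=
  (∀ r ∈ Γ.rules, ints r.p = true) ∧
  (∀ r ∈ Γ.rules, ∀ r' ∈ Γ.rules, r.p = r'.p → r.k = r'.k) ∧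
  (∀ c ∈ Γ.constrs, ∀ a, ¬ (c.G a).hasIntens ints)

/-- `n`-fold universal quantification. -/
def allN : (n : ℕ) → ((Fin n → D) → Fml P D) → Fml P D
  | 0, F => F (fun i => i.elim0)
  | n + 1, F => Fml.all fun d => allN n fun a => F (Fin.cons d a)

def CRule.sent (r : CRule P D) : Fml P D :=
  allN r.m fun u => allN r.k fun v =>
    Fml.imp (r.F u v) (Fml.atom r.p (List.ofFn v))

def CConstr.sent (c : CConstr P D) : Fml P D :=
  allN c.n fun a => Fml.imp (c.F a) (c.G a)

/-- The set of sentences of a completable set. -/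
def CSet.sents (Γ : CSet P D) : Set (Fml P D) :=
  {S | ∃ r ∈ Γ.rules, S = r.sent} ∪ {S | ∃ c ∈ Γ.constrs, S = c.sent}

/-- `I` is a supported model of `Γ`: every true intensional ground atom `p(d)` is the
consequent of an instance `F → p(d)` of a member of `Γ` whose antecedent is satisfied. -/
def CSet.Supported (ints : P → Bool) (I : Interp P D) (Γ : CSet P D) : Prop :=
  SatSet I Γ.sents ∧
  ∀ p (ds : List D), ints p = true → I p ds →
    ∃ r ∈ Γ.rules, r.p = p ∧
      ∃ (v : Fin r.k → D) (u : Fin r.m → D), List.ofFn v = ds ∧ (r.F u v).sat I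

/-- `I` satisfies the completion `COMP[Γ]` of the completable set `Γ`:
the completed definitions of all intensional symbols plus the constraints. -/
def CSet.SatComp (ints : P → Bool) (I : Interp P D) (Γ : CSet P D) : Prop :=
  (∀ p, ints p = true → ∀ ds : List D,
    (I p ds ↔ ∃ r ∈ Γ.rules, r.p = p ∧
      ∃ (v : Fin r.k → D) (u : Fin r.m → D), List.ofFn v = ds ∧ (r.F u v).sat I)) ∧
  (∀ c ∈ Γ.constrs, ∀ a, (c.F a).sat I → (c.G a).sat I)

/-- Edge relation of `G^sp_I(Γ)` for a completable set `Γ`, via instances `F → G`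
of its members. -/
def CSet.edge (ints : P → Bool) (I : Interp P D) (Γ : CSet P D)
    (A B : GrAtom P D) : Prop :=
  ∃ F G : Fml P D,
    ((∃ r ∈ Γ.rules, ∃ (u : Fin r.m → D) (v : Fin r.k → D),
        F = r.F u v ∧ G = Fml.atom r.p (List.ofFn v)) ∨
     (∃ c ∈ Γ.constrs, ∃ a : Fin c.n → D, F = c.F a ∧ G = c.G a)) ∧
    A ∈ G.pos ints I ∧ B ∈ F.pos ints I

/-- `I` is a stable model of the completable set `Γ`. -/
def CSet.Stable (ints : P → Bool) (I : Interp P D) (Γ : CSet P D) : Prop :=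
  StableModel ints I Γ.sents

/-- `I` is a pointwise stable model of the completable set `Γ`. -/
def CSet.PointwiseStable (ints : P → Bool) (I : Interp P D) (Γ : CSet P D) : Prop :=
  _root_.PointwiseStable ints I Γ.sents

section Aux
variable {ints : P → Bool} {H : Set (GrAtom P D)} {I : Interp P D}

lemma htSat_imp_sat (hH : H ⊆ Fml.idown ints I) :
    ∀ F : Fml P D, F.htSat ints H I → F.sat I := by
  intro F
  induction F with
  | atom p ds =>
      intro h
      simp only [Fml.htSat] at h
      by_cases hp : ints p
      · simp [hp] at h; exact (hH h).2
      · simpa [hp, Fml.sat] using h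
  | eq a b => exact id
  | bot => exact id
  | and F G ihF ihG => exact fun h => ⟨ihF h.1, ihG h.2⟩
  | or F G ihF ihG => exact fun h => h.elim (fun h => Or.inl (ihF h)) (fun h => Or.inr (ihG h))
  | imp F G ihF ihG => exact fun h => h.2
  | all f ih => exact fun h d => ih d (h d)
  | ex f ih => exact fun ⟨d, hd⟩ => ⟨d, ih d hd⟩

lemma htSat_iff_sat_of_not_hasIntens :
    ∀ F : Fml P D, ¬ F.hasIntens ints → (F.htSat ints H I ↔ F.sat I) := by
  intro F
  induction F with
  | atom p ds =>
      intro h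
      have hp : ¬ ints p = true := h
      simp [Fml.htSat, Fml.sat, hp]
  | eq a b => exact fun _ => Iff.rfl
  | bot => exact fun _ => Iff.rfl
  | and F G ihF ihG =>
      intro h
      simp only [Fml.hasIntens, not_or] at h
      simp [Fml.htSat, Fml.sat, ihF h.1, ihG h.2]
  | or F G ihF ihG =>
      intro h
      simp only [Fml.hasIntens, not_or] at h
      simp [Fml.htSat, Fml.sat, ihF h.1, ihG h.2]
  | imp F G ihF ihG =>
      intro h
      simp only [Fml.hasIntens, not_or] at h
      simp [Fml.htSat, Fml.sat, ihF h.1, ihG h.2]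
  | all f ih =>
      intro h
      simp only [Fml.hasIntens, not_exists] at h
      simp only [Fml.htSat, Fml.sat]
      exact forall_congr' fun d => ih d (h d)
  | ex f ih =>
      intro h
      simp only [Fml.hasIntens, not_exists] at h
      simp only [Fml.htSat, Fml.sat]
      exact exists_congr fun d => ih d (h d)

lemma allN_htSat : ∀ (n : ℕ) (F : (Fin n → D) → Fml P D),
    (allN n F).htSat ints H I ↔ ∀ a, (F a).htSat ints H I := by
  intro n
  induction n with
  | zero =>
      intro F
      simp only [allN]
      constructor
      · intro h a
        have : a = fun i => i.elim0 := funext fun i => i.elim0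
        rw [this]; exact h
      · intro h; exact h _
  | succ n ih =>
      intro F
      simp only [allN, Fml.htSat]
      constructor
      · intro h a
        have := (ih _).1 (h (a 0)) (Fin.tail a)
        simpa [Fin.cons_self_tail] using this
      · intro h d
        exact (ih _).2 fun a => h (Fin.cons d a)

lemma allN_sat : ∀ (n : ℕ) (F : (Fin n → D) → Fml P D),
    (allN n F).sat I ↔ ∀ a, (F a).sat I := by
  intro n
  induction n with
  | zero =>
      intro F
      simp only [allN]
      constructor
      · intro h a
        have : a = fun i => i.elim0 := funext fun i => i.elim0
        rw [this]; exact h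
      · intro h; exact h _
  | succ n ih =>
      intro F
      simp only [allN, Fml.sat]
      constructor
      · intro h a
        have := (ih _).1 (h (a 0)) (Fin.tail a)
        simpa [Fin.cons_self_tail] using this
      · intro h d
        exact (ih _).2 fun a => h (Fin.cons d a)

end Aux

/-- Every pointwise stable model of a completable set of sentences is supported. -/
theorem pointwiseStable_supported {P D : Type} (ints : P → Bool) (I : Interp P D)
    (Γ : CSet P D) (hΓ : Γ.Completable ints)
    (h : Γ.PointwiseStable ints I) : Γ.Supported ints I := by
  obtain ⟨hsat, hstab⟩ := h
  refine ⟨hsat, ?_⟩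
  intro p ds hp hI
  set M : GrAtom P D := (p, ds) with hM
  have hMmem : M ∈ Fml.idown ints I := ⟨hp, hI⟩
  have hH : (Fml.idown ints I \ {M} : Set (GrAtom P D)) ⊆ Fml.idown ints I :=
    Set.diff_subset
  have hnot := hstab M hMmem
  rw [HtSatSet] at hnot
  push_neg at hnot
  obtain ⟨S, hS, hSnot⟩ := hnot
  set H : Set (GrAtom P D) := Fml.idown ints I \ {M}
  rcases hS with ⟨r, hr, rfl⟩ | ⟨c, hc, rfl⟩
  · -- rule case
    rw [CRule.sent, allN_htSat] at hSnot
    push_neg at hSnot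
    obtain ⟨u, hu⟩ := hSnot
    rw [allN_htSat] at hu
    push_neg at hu
    obtain ⟨v, hv⟩ := hu
    simp only [Fml.htSat, not_and_or] at hv
    have hsatS : (r.sent).sat I := hsat _ (Or.inl ⟨r, hr, rfl⟩)
    rw [CRule.sent, allN_sat] at hsatS
    have hcl : (r.F u v).sat I → (Fml.atom r.p (List.ofFn v)).sat I := by
      have := (allN_sat _ _).1 (hsatS u) v
      exact this
    rcases hv with hv | hv
    swap
    · exact absurd hcl hv
    push_neg at hv
    obtain ⟨hF, hG⟩ := hv
    have hFsat : (r.F u v).sat I := htSat_imp_sat hH _ hF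
    have hIhead : I r.p (List.ofFn v) := hcl hFsat
    have hpint : ints r.p = true := hΓ.1 r hr
    have hhead : (r.p, List.ofFn v) ∈ Fml.idown ints I := ⟨hpint, hIhead⟩
    have hne : (r.p, List.ofFn v) ∈ ({M} : Set (GrAtom P D)) := by
      by_contra hne
      exact hG (by simp [Fml.htSat, hpint]; exact ⟨hhead, hne⟩)
    have heq : (r.p, List.ofFn v) = M := hne
    have hpe : r.p = p := congrArg Prod.fst heq
    have hde : List.ofFn v = ds := congrArg Prod.snd heq
    exact ⟨r, hr, hpe, v, u, hde, hFsat⟩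
  · -- constraint case: contradiction
    exfalso
    rw [CConstr.sent, allN_htSat] at hSnot
    push_neg at hSnot
    obtain ⟨a, ha⟩ := hSnot
    simp only [Fml.htSat, not_and_or] at ha
    have hsatS : (c.sent).sat I := hsat _ (Or.inr ⟨c, hc, rfl⟩)
    rw [CConstr.sent, allN_sat] at hsatS
    have hcl : (c.F a).sat I → (c.G a).sat I := hsatS a
    rcases ha with ha | ha
    swap
    · exact ha hcl
    push_neg at ha
    obtain ⟨hF, hG⟩ := ha
    have hGnoint : ¬ (c.G a).hasIntens ints := hΓ.2.2 c hc a
    exact hG ((htSat_iff_sat_of_not_hasIntens _ hGnoint).2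
      (hcl (htSat_imp_sat hH _ hF)))
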